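/- arXiv:2604.22252 — 2 statements merged into one kernel-verified Lean document; each statement's English description precedes it below -/
import Mathlib

section
/- If the Seidel spectrum of a graph G on n vertices is {σ_1,...,σ_n}, then the Seidel spectrum of D_m^*(G) is {mσ_i - (m-1) : i = 1,...,n} together with the eigenvalue 1 with multiplicity mn - n. -/
open Matrix Kronecker BigOperators Finset

/-- The all-ones matrix. -/
noncomputable def allOnes (k : Type*) [Fintype k] : Matrix k k ℝ :=
  Matrix.of fun _ _ => 1

/-- The Seidel matrix formed from an adjacency matrix `M`: `S(M) = J - I - 2M`. -/
noncomputable def seidelOf {k : Type*} [Fintype k] [DecidableEq k]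
    (M : Matrix k k ℝ) : Matrix k k ℝ :=
  allOnes k - 1 - 2 • M

/-- The (complex) multiset of eigenvalues of a real matrix: roots of its
characteristic polynomial over `ℂ`. -/
noncomputable def specC {k : Type*} [Fintype k] [DecidableEq k]
    (M : Matrix k k ℝ) : Multiset ℂ :=
  ((M.map (Complex.ofReal)).charpoly).roots

/-- The energy of a real matrix: the sum of absolute values of its eigenvalues. -/
noncomputable def energy {k : Type*} [Fintype k] [DecidableEq k]
    (M : Matrix k k ℝ) : ℝ :=
  ((specC M).map (fun z : ℂ => ‖z‖)).sum

/-!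
The Seidel matrix of `D_m^*(G)` is `J_m ⊗ (S - I) + I`, where `S` is the Seidel matrix of `G`.
For `B = S - I`, the matrix `J_m ⊗ B` factors as `U V` with `U` of size `mn × n`, `V` of size
`n × mn` and `V U = m B`, so by Sylvester's identity `X^n χ(U V) = X^(mn) χ(V U)` its spectrum is
that of `m B` together with `mn - n` zeros. Shifting by `I` gives `m σ - (m - 1)` and `1`.
-/

open Polynomial

namespace Matrix

variable {ι n R : Type*} [Fintype n] [DecidableEq n]

theorem roots_charpoly_add_scalar [CommRing R] [IsDomain R] (M : Matrix n n R) (μ : R) :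
    (M + scalar n μ).charpoly.roots = M.charpoly.roots.map (· + μ) := by
  have h := charpoly_sub_scalar M (-μ)
  rw [map_neg, sub_neg_eq_add] at h
  rw [h, ← one_mul X, ← C_1, roots_comp_C_mul_X_add_C _ _ _ isUnit_one]
  simp [sub_eq_add_neg]

theorem charpoly_smul [CommRing R] [IsDomain R] [Infinite R] (r : R) (M : Matrix n n R) :
    (r • M).charpoly = M.charpoly.scaleRoots r := by
  rcases eq_or_ne r 0 with rfl | hr
  · simp [charpoly_monic M |>.leadingCoeff]
  refine eq_of_infinite_eval_eq _ _
    ((Set.infinite_range_of_injective (mul_right_injective₀ hr)).mono ?_)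
  rintro _ ⟨t, rfl⟩
  rw [Set.mem_ofPred_eq, scaleRoots_eval_mul, eval_charpoly, eval_charpoly,
    charpoly_natDegree_eq_dim, ← det_smul, smul_sub, map_mul, scalar_apply r,
    ← smul_eq_diagonal_mul]

-- `B.submatrix Prod.snd Prod.snd` is the Kronecker product `J_ι ⊗ B`.
theorem submatrix_snd_snd_eq_mul [NonAssocSemiring R] (B : Matrix n n R) :
    (B.submatrix Prod.snd Prod.snd : Matrix (ι × n) (ι × n) R) =
      ((1 : Matrix n n R).submatrix Prod.snd id : Matrix (ι × n) n R) *
        B.submatrix id Prod.snd := by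
  ext p q
  simp [mul_apply, one_apply]

theorem mul_submatrix_snd [Fintype ι] [NonAssocSemiring R] (B : Matrix n n R) :
    B.submatrix id (Prod.snd : ι × n → n) *
        ((1 : Matrix n n R).submatrix Prod.snd id : Matrix (ι × n) n R) =
      (Fintype.card ι : R) • B := by
  ext k l
  simp [mul_apply, one_apply, Fintype.sum_prod_type]

theorem charpoly_submatrix_snd_snd [Fintype ι] [DecidableEq ι] [Nonempty ι] [CommRing R]
    (B : Matrix n n R) :
    (B.submatrix Prod.snd Prod.snd : Matrix (ι × n) (ι × n) R).charpoly =
      X ^ (Fintype.card ι * Fintype.card n - Fintype.card n) *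
        ((Fintype.card ι : R) • B).charpoly := by
  have hle : Fintype.card n ≤ Fintype.card (ι × n) := by
    rw [Fintype.card_prod]
    exact Nat.le_mul_of_pos_left _ Fintype.card_pos
  rw [submatrix_snd_snd_eq_mul, charpoly_mul_comm_of_le _ _ hle, mul_submatrix_snd,
    Fintype.card_prod]

end Matrix

theorem seidelOf_allOnes_kronecker {ι n : Type*} [Fintype ι] [DecidableEq ι] [Fintype n]
    [DecidableEq n] (A : Matrix n n ℝ) :
    seidelOf (allOnes ι ⊗ₖ (A + 1) - 1) = (seidelOf A - 1).submatrix Prod.snd Prod.snd + 1 := by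
  ext ⟨i, k⟩ ⟨j, l⟩
  simp only [seidelOf, allOnes, Matrix.sub_apply, Matrix.add_apply, Matrix.smul_apply,
    kroneckerMap_apply, of_apply, submatrix_apply, one_apply, Prod.mk.injEq]
  split_ifs <;> simp_all
  ring

theorem seidel_spectrum_Dmstar {m n : ℕ} (hm : 1 ≤ m) (G : SimpleGraph (Fin n))
    [DecidableRel G.Adj] :
    specC (seidelOf (allOnes (Fin m) ⊗ₖ (G.adjMatrix ℝ + 1) - 1)) =
      (specC (seidelOf (G.adjMatrix ℝ))).map (fun σ => (m : ℂ) * σ - ((m : ℂ) - 1)) +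
        Multiset.replicate (m * n - n) (1 : ℂ) := by
  have : Nonempty (Fin m) := ⟨⟨0, hm⟩⟩
  have hm_unit : IsUnit (m : ℂ) := isUnit_iff_ne_zero.mpr (by norm_cast; omega)
  set S := (seidelOf (G.adjMatrix ℝ)).map Complex.ofReal
  have hseidel : (seidelOf (allOnes (Fin m) ⊗ₖ (G.adjMatrix ℝ + 1) - 1)).map Complex.ofReal =
      (S + scalar _ (-1)).submatrix Prod.snd Prod.snd + scalar _ 1 := by
    rw [seidelOf_allOnes_kronecker]
    ext ⟨i, k⟩ ⟨j, l⟩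
    by_cases hkl : k = l <;> by_cases hij : i = j <;> simp [S, one_apply, hkl, hij, sub_eq_add_neg]
  rw [specC, specC, hseidel, roots_charpoly_add_scalar, charpoly_submatrix_snd_snd,
    roots_mul ((monic_X_pow _).mul (charpoly_monic _)).ne_zero, roots_X_pow, charpoly_smul,
    roots_scaleRoots _ (by simpa using hm_unit), roots_charpoly_add_scalar]
  simp only [Fintype.card_fin, Multiset.map_add, Multiset.map_map,
    Multiset.nsmul_singleton, Multiset.map_replicate, zero_add]
  rw [add_comm]
  congr 1
  exact Multiset.map_congr rfl fun σ _ => by simp only [Function.comp_apply]; ring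
end

section
/- Let G be a graph on n vertices with Seidel eigenvalues σ_1,...,σ_n satisfying |σ_i| > (m-1)/m for all i, where m ≥ 2. Then SE(D_m(G)) = SE(D_m^*(G)) if and only if G has equally many positive and negative Seidel eigenvalues. -/
open Matrix Kronecker BigOperators Finset Polynomial

/-!
Both Seidel matrices are of the form `J_m ⊗ B + c • 1`: `S(D_m G) = J_m ⊗ (S + 1) - 1` and
`S(D_m^* G) = J_m ⊗ (S - 1) + 1`. Since `J_m ⊗ B` factors as `A * E` with `E * A = m • B`, the
characteristic polynomials of `J_m ⊗ B` and `m • B` agree up to a power of `X`, which yields the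
spectra `{m σ_i + (m - 1)} ∪ {-1}` and `{m σ_i - (m - 1)} ∪ {1}`. The two energies therefore
differ by `∑ i, (|m σ_i + (m - 1)| - |m σ_i - (m - 1)|)`, and under `|m σ_i| > m - 1` each
term is `± 2 (m - 1)` according to the sign of `σ_i`.
-/

namespace Matrix

variable {ι l K : Type*} [Fintype ι] [DecidableEq ι] [Fintype l] [DecidableEq l]

theorem roots_charpoly_add_smul_one [Field K] (M : Matrix l l K) (c : K) :
    (M + c • 1).charpoly.roots = M.charpoly.roots.map (· + c) := by
  have hM : M + c • 1 = M - scalar l (-c) := by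
    rw [scalar_apply, ← smul_one_eq_diagonal]; simp [sub_eq_add_neg]
  have hX : (X + C (-c) : K[X]) = C 1 * X + C (-c) := by simp
  rw [hM, charpoly_sub_scalar, hX, roots_comp_C_mul_X_add_C _ _ _ isUnit_one]
  simp

theorem charpoly_smul_s11 [Field K] [Infinite K] (M : Matrix l l K) {c : K} (hc : c ≠ 0) :
    (c • M).charpoly = C (c ^ Fintype.card l) * M.charpoly.comp (C c⁻¹ * X) := by
  refine Polynomial.funext fun t => ?_
  rw [eval_mul, eval_comp, eval_charpoly, eval_charpoly, eval_C, ← det_smul]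
  congr 1
  ext i j
  by_cases hij : i = j <;> simp [hij, mul_sub, mul_inv_cancel_left₀ hc]

theorem roots_charpoly_smul [Field K] [CharZero K] (M : Matrix l l K) {c : K} (hc : c ≠ 0) :
    (c • M).charpoly.roots = M.charpoly.roots.map (c * ·) := by
  have hX : (C c⁻¹ * X : K[X]) = C c⁻¹ * X + C 0 := by simp
  rw [charpoly_smul_s11 M hc, roots_C_mul _ (pow_ne_zero _ hc), hX,
    roots_comp_C_mul_X_add_C _ _ _ (isUnit_iff_ne_zero.2 (inv_ne_zero hc))]
  simp

theorem X_pow_mul_charpoly_kronecker_allOnes [CommRing K] (B : Matrix l l K) :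
    X ^ Fintype.card l * ((of fun _ _ => 1 : Matrix ι ι K) ⊗ₖ B).charpoly =
      X ^ (Fintype.card ι * Fintype.card l) * ((Fintype.card ι : K) • B).charpoly := by
  let A : Matrix (ι × l) l K := of fun p k => B p.2 k
  let E : Matrix l (ι × l) K := of fun k p => (1 : Matrix l l K) k p.2
  have hAE : A * E = (of fun _ _ => 1 : Matrix ι ι K) ⊗ₖ B := by
    ext ⟨i, j⟩ ⟨i', j'⟩
    simp [A, E, mul_apply, one_apply]
  have hEA : E * A = (Fintype.card ι : K) • B := by
    ext k k'
    simp [A, E, mul_apply, one_apply, Fintype.sum_prod_type]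
  rw [← hAE, ← hEA, charpoly_mul_comm', Fintype.card_prod]

theorem roots_charpoly_kronecker_allOnes [Field K] [CharZero K] [Nonempty ι] (B : Matrix l l K) :
    ((of fun _ _ => 1 : Matrix ι ι K) ⊗ₖ B).charpoly.roots =
      Multiset.replicate ((Fintype.card ι - 1) * Fintype.card l) 0 +
        B.charpoly.roots.map ((Fintype.card ι : K) * ·) := by
  have h := congrArg roots (X_pow_mul_charpoly_kronecker_allOnes (ι := ι) B)
  have hι : (Fintype.card ι : K) ≠ 0 := Nat.cast_ne_zero.2 Fintype.card_ne_zero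
  rw [roots_mul ((monic_X_pow _).mul (charpoly_monic _)).ne_zero,
    roots_mul ((monic_X_pow _).mul (charpoly_monic _)).ne_zero, roots_X_pow, roots_X_pow,
    roots_charpoly_smul B hι] at h
  have hcard : Fintype.card ι * Fintype.card l =
      Fintype.card l + (Fintype.card ι - 1) * Fintype.card l := by
    rw [Nat.sub_one_mul]
    have := Nat.le_mul_of_pos_left (Fintype.card l) (Fintype.card_pos (α := ι))
    omega
  rw [hcard, Multiset.nsmul_singleton, Multiset.nsmul_singleton, Multiset.replicate_add,
    add_assoc] at h
  exact add_left_cancel h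

end Matrix

section Seidel

variable {ι l : Type*} [Fintype ι] [DecidableEq ι] [Fintype l] [DecidableEq l]

theorem specC_add_smul_one (M : Matrix l l ℝ) (c : ℝ) :
    specC (M + c • 1) = (specC M).map (· + (c : ℂ)) := by
  have hmap : (M + c • 1).map Complex.ofReal = M.map Complex.ofReal + (c : ℂ) • 1 := by
    ext i j
    by_cases hij : i = j <;> simp [hij]
  rw [specC, hmap, Matrix.roots_charpoly_add_smul_one, specC]

theorem specC_allOnes_kronecker [Nonempty ι] (B : Matrix l l ℝ) :
    specC (allOnes ι ⊗ₖ B) = Multiset.replicate ((Fintype.card ι - 1) * Fintype.card l) 0 +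
      (specC B).map ((Fintype.card ι : ℂ) * ·) := by
  have hmap : (allOnes ι ⊗ₖ B).map Complex.ofReal =
      (of fun _ _ => 1 : Matrix ι ι ℂ) ⊗ₖ B.map Complex.ofReal := by
    ext ⟨i, j⟩ ⟨i', j'⟩
    simp [allOnes]
  rw [specC, hmap, Matrix.roots_charpoly_kronecker_allOnes, specC]

theorem energy_allOnes_kronecker_add_smul_one [Nonempty ι] (M : Matrix l l ℝ) (σ : l → ℝ)
    (hM : specC M = univ.val.map fun i => (σ i : ℂ)) (a c : ℝ) :
    energy (allOnes ι ⊗ₖ (M + a • 1) + c • 1) =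
      (Fintype.card ι - 1) * Fintype.card l * |c| + ∑ i, |Fintype.card ι * (σ i + a) + c| := by
  rw [energy, specC_add_smul_one, specC_allOnes_kronecker, specC_add_smul_one, hM]
  simp only [Multiset.map_map, Multiset.map_add, Multiset.map_replicate, Multiset.sum_add,
    Multiset.sum_replicate, Function.comp_def]
  refine congrArg₂ (· + ·) ?_ ?_
  · rw [nsmul_eq_mul, zero_add, Complex.norm_real, Real.norm_eq_abs, Nat.cast_mul,
      Nat.cast_sub Fintype.card_pos, Nat.cast_one]
  · refine sum_congr rfl fun i _ => ?_
    rw [← Real.norm_eq_abs, ← Complex.norm_real]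
    push_cast
    rfl

theorem seidelOf_allOnes_kronecker_s11 (M : Matrix l l ℝ) :
    seidelOf (allOnes ι ⊗ₖ M) =
      allOnes ι ⊗ₖ (seidelOf M + (1 : ℝ) • 1) + (-1 : ℝ) • 1 := by
  ext ⟨i, j⟩ ⟨i', j'⟩
  simp only [seidelOf, allOnes, Matrix.sub_apply, Matrix.add_apply, Matrix.smul_apply,
    kronecker_apply, of_apply, one_apply, smul_eq_mul, Prod.mk.injEq]
  split_ifs <;> ring

theorem seidelOf_allOnes_kronecker_add_one_sub_one (M : Matrix l l ℝ) :
    seidelOf (allOnes ι ⊗ₖ (M + 1) - 1) =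
      allOnes ι ⊗ₖ (seidelOf M + (-1 : ℝ) • 1) + (1 : ℝ) • 1 := by
  ext ⟨i, j⟩ ⟨i', j'⟩
  simp only [seidelOf, allOnes, Matrix.sub_apply, Matrix.add_apply, Matrix.smul_apply,
    kronecker_apply, of_apply, one_apply, smul_eq_mul, Prod.mk.injEq]
  split_ifs <;> ring

end Seidel

theorem abs_add_sub_abs_sub_of_le_abs {a x : ℝ} (ha : 0 ≤ a) (hx : a ≤ |x|) :
    |x + a| - |x - a| = 2 * a * ((if 0 < x then 1 else 0) - (if x < 0 then 1 else 0)) := by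
  rcases lt_trichotomy x 0 with hneg | hzero | hpos
  · rw [abs_of_neg hneg] at hx
    rw [abs_of_nonpos (by linarith), abs_of_neg (by linarith), if_neg hneg.not_gt, if_pos hneg]
    ring
  · subst hzero
    simp [le_antisymm (by simpa using hx) ha]
  · rw [abs_of_pos hpos] at hx
    rw [abs_of_pos (by linarith), abs_of_nonneg (by linarith), if_pos hpos, if_neg hpos.not_gt]
    ring

theorem sum_abs_add_sub_abs_sub {l : Type*} [Fintype l] {x : l → ℝ} {a : ℝ} (ha : 0 ≤ a)
    (hx : ∀ i, a ≤ |x i|) :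
    ∑ i, (|x i + a| - |x i - a|) =
      2 * a * ((#{i | 0 < x i} : ℝ) - #{i | x i < 0}) := by
  simp only [abs_add_sub_abs_sub_of_le_abs ha (hx _), ← mul_sum, sum_sub_distrib,
    natCast_card_filter]

theorem equienergetic_iff {m n : ℕ} (hm : 2 ≤ m) (G : SimpleGraph (Fin n))
    [DecidableRel G.Adj] (σ : Fin n → ℝ)
    (hspec : specC (seidelOf (G.adjMatrix ℝ)) =
      (Finset.univ.val.map fun i => ((σ i : ℝ) : ℂ)))
    (habs : ∀ i, |σ i| > ((m : ℝ) - 1) / m) :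
    energy (seidelOf (allOnes (Fin m) ⊗ₖ G.adjMatrix ℝ)) =
      energy (seidelOf (allOnes (Fin m) ⊗ₖ (G.adjMatrix ℝ + 1) - 1)) ↔
    (Finset.univ.filter fun i => 0 < σ i).card =
      (Finset.univ.filter fun i => σ i < 0).card := by
  have : Nonempty (Fin m) := ⟨⟨0, by omega⟩⟩
  have hm0 : (0 : ℝ) < m := by positivity
  have hm1 : (0 : ℝ) < m - 1 := by
    have : (2 : ℝ) ≤ m := by exact_mod_cast hm
    linarith
  have hsep : ∀ i, (m : ℝ) - 1 ≤ |m * σ i| := fun i => by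
    rw [abs_mul, Nat.abs_cast]
    exact ((div_lt_iff₀' hm0).1 (habs i)).le
  have hdiff := sum_abs_add_sub_abs_sub hm1.le hsep
  simp only [mul_pos_iff_of_pos_left hm0, mul_neg_iff, hm0, hm0.not_gt, true_and, false_and,
    or_false] at hdiff
  rw [seidelOf_allOnes_kronecker_s11, seidelOf_allOnes_kronecker_add_one_sub_one,
    energy_allOnes_kronecker_add_smul_one _ σ hspec,
    energy_allOnes_kronecker_add_smul_one _ σ hspec, abs_neg, add_right_inj, ← sub_eq_zero,
    ← sum_sub_distrib, Fintype.card_fin]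
  have hshift : ∀ i, |(m : ℝ) * (σ i + 1) + -1| - |m * (σ i + -1) + 1| =
      |m * σ i + (m - 1)| - |m * σ i - (m - 1)| := fun i => by ring_nf
  rw [sum_congr rfl fun i _ => hshift i, hdiff, mul_eq_zero, sub_eq_zero, Nat.cast_inj,
    or_iff_right (by positivity)]
end
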